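/- Let S be a complete and decomposable SPN with positive edge weights w and fixed input x, and define the node derivative values D_v(x|w) top-down by: D_v = 1 when v is the root, and otherwise D_v(x|w) = (sum over sum-node parents u of v of w_{uv} D_u(x|w)) + (sum over product-node parents u of v of D_u(x|w) times the product over children h of u with h not equal to v of f_h(x|w)). Then for every node v, the map w mapsto D_v(x|w) on R^D_{++} (where w collects all sum-edge weights) is a finite sum of monomials with nonnegative coefficients; in particular, it is a posynomial function of w whenever it is not identically zero. -/
import Mathlib


inductive NodeKind
  | sum
  | prod
  | leaf
deriving DecidableEq

/-- A sum-product network over `N` Boolean variables, with node set `V`: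
a rooted DAG (acyclicity witnessed by a rank function) whose leaves are
indicator variables and whose internal nodes are sum or product nodes. -/
structure SPN (V : Type) [Fintype V] [DecidableEq V] (N : ℕ) where
  root : V
  kind : V → NodeKind
  children : V → Finset V
  leaf_children : ∀ v, kind v = NodeKind.leaf → children v = ∅
  internal_nonempty : ∀ v, kind v ≠ NodeKind.leaf → (children v).Nonempty
  root_no_parent : ∀ u, root ∉ children u
  leafVar : V → Fin N
  leafSign : V → Bool
  rank : V → ℕ
  rank_lt : ∀ v, ∀ u ∈ children v, rank u < rank v

namespace SPN

variable {V : Type} [Fintype V] [DecidableEq V] {N : ℕ}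

/-- The value `f_v(·|w)` of every node, where `w` assigns a weight to every
edge `(v,u)` out of a sum node and `L` gives the value of every leaf. -/
noncomputable def evalWith (S : SPN V N) (w : V × V → ℝ) (L : V → ℝ) (v : V) : ℝ :=
  match S.kind v with
  | NodeKind.leaf => L v
  | NodeKind.sum => ∑ u ∈ (S.children v).attach, w (v, u.1) * S.evalWith w L u.1
  | NodeKind.prod => ∏ u ∈ (S.children v).attach, S.evalWith w L u.1
termination_by S.rank v
decreasing_by
  · exact S.rank_lt v u.1 u.2
  · exact S.rank_lt v u.1 u.2

/-- The leaf values determined by an input `x ∈ {0,1}^N`: the leaf over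
variable `X_n` is the indicator `I[x_n = leafSign]`. -/
def ind (S : SPN V N) (x : Fin N → Bool) (v : V) : ℝ :=
  if x (S.leafVar v) = S.leafSign v then 1 else 0

/-- The scope of a node: its variable at a leaf, the union of the scopes of
the children at an internal node. -/
noncomputable def scope (S : SPN V N) (v : V) : Finset (Fin N) :=
  match S.kind v with
  | NodeKind.leaf => {S.leafVar v}
  | NodeKind.sum => (S.children v).attach.sup fun u => S.scope u.1
  | NodeKind.prod => (S.children v).attach.sup fun u => S.scope u.1
termination_by S.rank v
decreasing_by
  · exact S.rank_lt v u.1 u.2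
  · exact S.rank_lt v u.1 u.2

/-- An SPN is complete if all children of every sum node have the same scope. -/
def Complete (S : SPN V N) : Prop :=
  ∀ v, S.kind v = NodeKind.sum →
    ∀ u₁ ∈ S.children v, ∀ u₂ ∈ S.children v, S.scope u₁ = S.scope u₂

/-- An SPN is decomposable if the children of every product node have
pairwise disjoint scopes. -/
def Decomposable (S : SPN V N) : Prop :=
  ∀ v, S.kind v = NodeKind.prod →
    ∀ u₁ ∈ S.children v, ∀ u₂ ∈ S.children v, u₁ ≠ u₂ →
      Disjoint (S.scope u₁) (S.scope u₂)

/-- `(TV, TE)` is an induced SPN (induced tree) of `S`: a subgraph of `S`,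
generated from the root, containing exactly one child of every sum node it
contains and all children of every product node it contains, together with
the corresponding edges. -/
structure IsInducedTree (S : SPN V N) (TV : Finset V) (TE : Finset (V × V)) : Prop where
  root_mem : S.root ∈ TV
  edges_sub : ∀ e ∈ TE, e.1 ∈ TV ∧ e.2 ∈ TV ∧ e.2 ∈ S.children e.1
  reach : ∀ v ∈ TV, v ≠ S.root → ∃ u, (u, v) ∈ TE
  sum_unique : ∀ v ∈ TV, S.kind v = NodeKind.sum → ∃! u, u ∈ S.children v ∧ u ∈ TV
  sum_edge : ∀ v ∈ TV, S.kind v = NodeKind.sum → ∀ u ∈ S.children v, u ∈ TV → (v, u) ∈ TE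
  prod_mem : ∀ v ∈ TV, S.kind v = NodeKind.prod → ∀ u ∈ S.children v, u ∈ TV
  prod_edge : ∀ v ∈ TV, S.kind v = NodeKind.prod → ∀ u ∈ S.children v, (v, u) ∈ TE

end SPN

/-- A posynomial on the positive orthant of `ι → ℝ`: a finite (nonempty) sum
of monomials `c_t * ∏ i, x i ^ a t i` with positive coefficients `c_t` and
arbitrary real exponents. -/
def IsPosynomial {ι : Type*} [Fintype ι] (f : (ι → ℝ) → ℝ) : Prop :=
  ∃ k : ℕ, 0 < k ∧ ∃ (c : Fin k → ℝ) (a : Fin k → ι → ℝ),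
    (∀ t, 0 < c t) ∧
    ∀ x : ι → ℝ, (∀ i, 0 < x i) → f x = ∑ t, c t * ∏ i, x i ^ a t i

def SNM {ι : Type*} [Fintype ι] (f : (ι → ℝ) → ℝ) : Prop :=
  ∃ (k : ℕ) (c : Fin k → ℝ) (a : Fin k → ι → ℝ),
    (∀ t, 0 ≤ c t) ∧
    ∀ x : ι → ℝ, (∀ i, 0 < x i) → f x = ∑ t, c t * ∏ i, x i ^ a t i

variable {ι : Type*} [Fintype ι]

theorem SNM.congr {f g : (ι → ℝ) → ℝ} (h : ∀ x, (∀ i, 0 < x i) → f x = g x)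
    (hg : SNM g) : SNM f := by
  obtain ⟨k, c, a, hc, H⟩ := hg
  exact ⟨k, c, a, hc, fun x hx => (h x hx).trans (H x hx)⟩

theorem SNM.const (d : ℝ) (hd : 0 ≤ d) : SNM (fun _ : ι → ℝ => d) := by
  refine ⟨1, fun _ => d, fun _ _ => 0, fun _ => hd, fun x hx => ?_⟩
  simp [Real.rpow_zero]

theorem SNM.coord [DecidableEq ι] (e0 : ι) : SNM (fun x : ι → ℝ => x e0) := by
  refine ⟨1, fun _ => 1, fun _ i => if i = e0 then 1 else 0, fun _ => zero_le_one,
    fun x hx => ?_⟩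
  have h : ∀ i, x i ^ (if i = e0 then (1:ℝ) else 0) = if i = e0 then x i else 1 := by
    intro i; split <;> simp
  simp [h]

theorem SNM.add {f g : (ι → ℝ) → ℝ} (hf : SNM f) (hg : SNM g) :
    SNM (fun x => f x + g x) := by
  obtain ⟨k1, c1, a1, hc1, H1⟩ := hf
  obtain ⟨k2, c2, a2, hc2, H2⟩ := hg
  refine ⟨k1 + k2, Fin.append c1 c2, Fin.append a1 a2, ?_, fun x hx => ?_⟩
  · intro t
    induction t using Fin.addCases with
    | left i => simpa using hc1 i
    | right i => simpa using hc2 i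
  · rw [Fin.sum_univ_add]
    simp only [Fin.append_left, Fin.append_right]
    rw [H1 x hx, H2 x hx]

theorem SNM.mul {f g : (ι → ℝ) → ℝ} (hf : SNM f) (hg : SNM g) :
    SNM (fun x => f x * g x) := by
  obtain ⟨k1, c1, a1, hc1, H1⟩ := hf
  obtain ⟨k2, c2, a2, hc2, H2⟩ := hg
  refine ⟨k1 * k2,
    fun t => c1 (finProdFinEquiv.symm t).1 * c2 (finProdFinEquiv.symm t).2,
    fun t i => a1 (finProdFinEquiv.symm t).1 i + a2 (finProdFinEquiv.symm t).2 i,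
    fun t => mul_nonneg (hc1 _) (hc2 _), fun x hx => ?_⟩
  rw [← Equiv.sum_comp finProdFinEquiv
    (fun t => (c1 (finProdFinEquiv.symm t).1 * c2 (finProdFinEquiv.symm t).2) *
      ∏ i, x i ^ (a1 (finProdFinEquiv.symm t).1 i + a2 (finProdFinEquiv.symm t).2 i))]
  simp only [Equiv.symm_apply_apply]
  rw [H1 x hx, H2 x hx, Finset.sum_mul_sum, Fintype.sum_prod_type]
  apply Finset.sum_congr rfl
  intro s _
  apply Finset.sum_congr rfl
  intro t _
  have : ∀ i, x i ^ (a1 s i + a2 t i) = x i ^ a1 s i * x i ^ a2 t i := by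
    intro i; exact Real.rpow_add (hx i) _ _
  simp only [this, Finset.prod_mul_distrib]
  ring

theorem SNM.finsetSum {α : Type*} [DecidableEq α] (s : Finset α)
    (f : α → (ι → ℝ) → ℝ) (h : ∀ i ∈ s, SNM (f i)) :
    SNM (fun x => ∑ i ∈ s, f i x) := by
  induction s using Finset.induction_on with
  | empty => simpa using SNM.const 0 le_rfl
  | @insert a s hni ih =>
    have := SNM.add (h a (Finset.mem_insert_self a s))
      (ih fun i hi => h i (Finset.mem_insert_of_mem hi))
    apply SNM.congr (g := fun x => f a x + ∑ i ∈ s, f i x) ?_ this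
    intro x _; rw [Finset.sum_insert hni]

theorem SNM.finsetProd {α : Type*} [DecidableEq α] (s : Finset α)
    (f : α → (ι → ℝ) → ℝ) (h : ∀ i ∈ s, SNM (f i)) :
    SNM (fun x => ∏ i ∈ s, f i x) := by
  induction s using Finset.induction_on with
  | empty => simpa using SNM.const 1 zero_le_one
  | @insert a s hni ih =>
    have := SNM.mul (h a (Finset.mem_insert_self a s))
      (ih fun i hi => h i (Finset.mem_insert_of_mem hi))
    apply SNM.congr (g := fun x => f a x * ∏ i ∈ s, f i x) ?_ this
    intro x _; rw [Finset.prod_insert hni]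

theorem SNM.posy {f : (ι → ℝ) → ℝ} (hf : SNM f)
    (hne : ¬ ∀ x : ι → ℝ, (∀ i, 0 < x i) → f x = 0) : IsPosynomial f := by
  classical
  obtain ⟨k, c, a, hc, H⟩ := hf
  set s : Finset (Fin k) := Finset.univ.filter (fun t => 0 < c t) with hs
  have hzero : ∀ t ∉ s, c t = 0 := by
    intro t ht
    have : ¬ 0 < c t := by
      intro h; exact ht (Finset.mem_filter.mpr ⟨Finset.mem_univ t, h⟩)
    linarith [hc t]
  have hsum : ∀ x : ι → ℝ, (∀ i, 0 < x i) →
      f x = ∑ t ∈ s, c t * ∏ i, x i ^ a t i := by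
    intro x hx
    rw [H x hx]
    refine (Finset.sum_subset (Finset.subset_univ s) ?_).symm
    intro t _ ht
    rw [hzero t ht, zero_mul]
  have hcard : 0 < s.card := by
    rcases Finset.eq_empty_or_nonempty s with he | hne'
    · exfalso
      apply hne
      intro x hx
      rw [hsum x hx, he, Finset.sum_empty]
    · exact Finset.card_pos.mpr hne'
  refine ⟨s.card, hcard, fun i => c (s.equivFin.symm i).1,
    fun i => a (s.equivFin.symm i).1, fun i => ?_, fun x hx => ?_⟩
  · have := (s.equivFin.symm i).2
    exact (Finset.mem_filter.mp this).2
  · rw [hsum x hx, ← Finset.sum_coe_sort s (fun t => c t * ∏ i, x i ^ a t i),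
      ← Equiv.sum_comp s.equivFin.symm
        (fun t : s => c t.1 * ∏ i, x i ^ a t.1 i)]


theorem eval_snm {V : Type} [Fintype V] [DecidableEq V] {N : ℕ} (S : SPN V N)
    (x : Fin N → Bool) (v : V) :
    SNM (fun w : V × V → ℝ => S.evalWith w (S.ind x) v) := by
  have key : ∀ n (v : V), S.rank v < n →
      SNM (fun w : V × V → ℝ => S.evalWith w (S.ind x) v) := by
    intro n
    induction n with
    | zero => intro v h; omega
    | succ n ih =>
      intro v hv
      cases hk : S.kind v with
      | leaf =>
        apply SNM.congr (g := fun _ => S.ind x v)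
        · intro w _; rw [SPN.evalWith, hk]
        · apply SNM.const; unfold SPN.ind; split <;> norm_num
      | sum =>
        apply SNM.congr
          (g := fun w => ∑ u ∈ (S.children v).attach, w (v, u.1) * S.evalWith w (S.ind x) u.1)
        · intro w _; rw [SPN.evalWith, hk]
        · apply SNM.finsetSum
          intro u _
          exact SNM.mul (SNM.coord _) (ih u.1 (by have := S.rank_lt v u.1 u.2; omega))
      | prod =>
        apply SNM.congr
          (g := fun w => ∏ u ∈ (S.children v).attach, S.evalWith w (S.ind x) u.1)
        · intro w _; rw [SPN.evalWith, hk]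
        · apply SNM.finsetProd
          intro u _
          exact ih u.1 (by have := S.rank_lt v u.1 u.2; omega)
  exact key (S.rank v + 1) v (by omega)

/-- Let `S` be a complete and decomposable SPN with fixed
input `x`, and let `Dv w` be the node derivative values for the (positive)
weight vector `w`, defined top-down by `Dv w root = 1` and, for `v ≠ root`,
`Dv w v = ∑_{sum parents u} w (u,v) * Dv w u +
          ∑_{product parents u} Dv w u * ∏_{h ∈ children u, h ≠ v} f_h(x|w)`.
Then for every node `v`, the map `w ↦ Dv w v` on the positive orthant is a
finite sum of monomials with nonnegative coefficients; in particular it is a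
posynomial whenever it is not identically zero. -/
theorem node_derivative_is_posynomial
    {V : Type} [Fintype V] [DecidableEq V] {N : ℕ} (S : SPN V N)
    (hC : S.Complete) (hD : S.Decomposable)
    (x : Fin N → Bool)
    (Dv : (V × V → ℝ) → V → ℝ)
    (hDroot : ∀ w : V × V → ℝ, (∀ e, 0 < w e) → Dv w S.root = 1)
    (hDrec : ∀ w : V × V → ℝ, (∀ e, 0 < w e) → ∀ v, v ≠ S.root → Dv w v =
      (∑ u ∈ Finset.univ.filter
          (fun u => S.kind u = NodeKind.sum ∧ v ∈ S.children u),
        w (u, v) * Dv w u) +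
      ∑ u ∈ Finset.univ.filter
          (fun u => S.kind u = NodeKind.prod ∧ v ∈ S.children u),
        Dv w u * ∏ h ∈ (S.children u).erase v, S.evalWith w (S.ind x) h) :
    ∀ v : V,
      (∃ (k : ℕ) (c : Fin k → ℝ) (a : Fin k → (V × V) → ℝ),
        (∀ t, 0 ≤ c t) ∧
        ∀ w : V × V → ℝ, (∀ e, 0 < w e) →
          Dv w v = ∑ t, c t * ∏ e, w e ^ a t e) ∧
      ((¬ ∀ w : V × V → ℝ, (∀ e, 0 < w e) → Dv w v = 0) →
        IsPosynomial fun w : V × V → ℝ => Dv w v) := by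
    classical
  have hB : ∀ u : V, S.rank u ≤ Finset.univ.sup S.rank :=
    fun u => Finset.le_sup (Finset.mem_univ u)
  set B := Finset.univ.sup S.rank with hBdef
  have key : ∀ n (v : V), B + 1 - S.rank v ≤ n → SNM (fun w : V × V → ℝ => Dv w v) := by
    intro n
    induction n with
    | zero => intro v h; have := hB v; omega
    | succ n ih =>
      intro v hv
      by_cases hr : v = S.root
      · subst hr
        exact SNM.congr (fun w hw => hDroot w hw) (SNM.const 1 zero_le_one)
      · apply SNM.congr (g := fun w =>
          (∑ u ∈ Finset.univ.filter
              (fun u => S.kind u = NodeKind.sum ∧ v ∈ S.children u),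
            w (u, v) * Dv w u) +
          ∑ u ∈ Finset.univ.filter
              (fun u => S.kind u = NodeKind.prod ∧ v ∈ S.children u),
            Dv w u * ∏ h ∈ (S.children u).erase v, S.evalWith w (S.ind x) h)
          (fun w hw => hDrec w hw v hr)
        apply SNM.add
        · apply SNM.finsetSum
          intro u hu
          have hm : v ∈ S.children u := (Finset.mem_filter.mp hu).2.2
          have hru : S.rank v < S.rank u := S.rank_lt u v hm
          exact SNM.mul (SNM.coord (u, v)) (ih u (by have := hB u; have := hB v; omega))
        · apply SNM.finsetSum
          intro u hu
          have hm : v ∈ S.children u := (Finset.mem_filter.mp hu).2.2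
          have hru : S.rank v < S.rank u := S.rank_lt u v hm
          exact SNM.mul (ih u (by have := hB u; have := hB v; omega))
            (SNM.finsetProd _ _ (fun h _ => eval_snm S x h))
  intro v
  have main : SNM (fun w : V × V → ℝ => Dv w v) := key (B + 1 - S.rank v) v le_rfl
  exact ⟨main, fun h => SNM.posy main h⟩
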